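/- Let A ∈ ℝ^{n×n}, B ∈ ℝ^{n×m}, and let V ∈ ℝ^{n×k} have orthonormal columns (Vᵀ V = I_k). Set Ã = Vᵀ A V and B̃ = Vᵀ B, and suppose T ∈ ℝ^{k×k} solves the projected Lyapunov equation Ã T + T Ãᵀ + B̃ B̃ᵀ = 0. Let R = A (V T Vᵀ) + (V T Vᵀ) Aᵀ + B Bᵀ. Suppose R has an eigenpair (λ, q) with q ≠ 0 and |λ| = ‖R‖₂ (the Euclidean operator norm of R). If q lies in the column span of V, then R = 0; that is, V T Vᵀ is an exact solution of the Lyapunov equation A C + C Aᵀ + B Bᵀ = 0. (This is Proposition 2.3 of the paper.) -/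

import Mathlib

open Matrix
open scoped Matrix.Norms.L2Operator

/-!
Write `q = V c`. Compressing the residual onto the range of `V` gives exactly the projected
Lyapunov residual, so `Vᵀ R V = 0` and hence `qᵀ R q = cᵀ (Vᵀ R V) c = 0`. On the other hand
`qᵀ R q = λ ‖q‖²` with `q ≠ 0`, so `λ = 0`; as `|λ| = ‖R‖₂`, the residual vanishes.
-/

namespace Matrix

variable {ι κ μ R : Type*} [Fintype κ]

lemma exists_eq_mulVec_of_mem_span_range_transpose [CommSemiring R]
    {V : Matrix ι κ R} {q : ι → R} (hq : q ∈ Submodule.span R (Set.range Vᵀ)) :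
    ∃ c, q = V *ᵥ c := by
  obtain ⟨c, hc⟩ := LinearMap.mem_range.mp (V.range_mulVecLin.ge hq)
  exact ⟨c, hc.symm⟩

def lyapunovResidual [Fintype ι] [Fintype μ] [Semiring R] (A : Matrix ι ι R) (B : Matrix ι μ R)
    (C : Matrix ι ι R) : Matrix ι ι R :=
  A * C + C * Aᵀ + B * Bᵀ

lemma transpose_mul_lyapunovResidual_mul [Fintype ι] [Fintype μ] [DecidableEq κ] [CommSemiring R]
    {V : Matrix ι κ R} (hV : Vᵀ * V = 1) (A : Matrix ι ι R) (B : Matrix ι μ R)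
    (T : Matrix κ κ R) :
    Vᵀ * lyapunovResidual A B (V * T * Vᵀ) * V = lyapunovResidual (Vᵀ * A * V) (Vᵀ * B) T := by
  have hVV : ∀ X : Matrix κ κ R, Vᵀ * (V * X) = X := fun X => by
    rw [← Matrix.mul_assoc, hV, Matrix.one_mul]
  simp only [lyapunovResidual, Matrix.add_mul, Matrix.mul_add, Matrix.transpose_mul,
    Matrix.transpose_transpose, Matrix.mul_assoc, hVV, hV, Matrix.mul_one]

lemma mulVec_dotProduct_mulVec_eq_zero [Fintype ι] [CommSemiring R] {V : Matrix ι κ R}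
    {M : Matrix ι ι R} (hM : Vᵀ * M * V = 0) (c : κ → R) :
    V *ᵥ c ⬝ᵥ M *ᵥ (V *ᵥ c) = 0 := by
  rw [mulVec_mulVec, dotProduct_mulVec, vecMul_mulVec, ← Matrix.mul_assoc, hM]
  simp

lemma eigenvalue_eq_zero_of_dotProduct_mulVec_eq_zero [Fintype ι] [CommRing R] [LinearOrder R]
    [IsStrictOrderedRing R] {M : Matrix ι ι R} {q : ι → R} {lam : R} (hq : q ≠ 0)
    (heig : M *ᵥ q = lam • q) (hzero : q ⬝ᵥ M *ᵥ q = 0) :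
    lam = 0 := by
  rw [heig, dotProduct_smul, smul_eq_mul] at hzero
  exact (mul_eq_zero.mp hzero).resolve_right (dotProduct_self_eq_zero.not.mpr hq)

end Matrix

/-- Proposition 2.3 of the paper: if `V` has orthonormal columns, `T` solves the projected
Lyapunov equation `Ã T + T Ãᵀ + B̃ B̃ᵀ = 0` with `Ã = Vᵀ A V`, `B̃ = Vᵀ B`, and the
residual `R = A V T Vᵀ + V T Vᵀ Aᵀ + B Bᵀ` has an eigenpair `(lam, q)` with `q ≠ 0`,
`|lam| = ‖R‖₂` (the Euclidean operator norm), and `q` in the column span of `V`, then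
`R = 0`, i.e. `V T Vᵀ` solves the Lyapunov equation exactly. -/
theorem rails_exact_solution_of_eigenvector_in_span
    {n m k : ℕ} (A : Matrix (Fin n) (Fin n) ℝ) (B : Matrix (Fin n) (Fin m) ℝ)
    (V : Matrix (Fin n) (Fin k) ℝ) (hV : Vᵀ * V = 1)
    (T : Matrix (Fin k) (Fin k) ℝ)
    (hT : (Vᵀ * A * V) * T + T * (Vᵀ * A * V)ᵀ + (Vᵀ * B) * (Vᵀ * B)ᵀ = 0)
    (R : Matrix (Fin n) (Fin n) ℝ)
    (hR : R = A * (V * T * Vᵀ) + (V * T * Vᵀ) * Aᵀ + B * Bᵀ)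
    (q : Fin n → ℝ) (hq : q ≠ 0) (lam : ℝ)
    (heig : R.mulVec q = lam • q)
    (hnorm : |lam| = ‖R‖)
    (hspan : q ∈ Submodule.span ℝ (Set.range Vᵀ)) :
    R = 0 := by
  obtain ⟨c, rfl⟩ := exists_eq_mulVec_of_mem_span_range_transpose hspan
  have hcompressed : Vᵀ * R * V = 0 := by
    rw [hR]
    exact (transpose_mul_lyapunovResidual_mul hV A B T).trans hT
  have hlam : lam = 0 := eigenvalue_eq_zero_of_dotProduct_mulVec_eq_zero hq heig
    (mulVec_dotProduct_mulVec_eq_zero hcompressed c)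
  rw [← norm_eq_zero, ← hnorm, hlam, abs_zero]
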